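/- arXiv:0906.5195 — 4 statements merged into one kernel-verified Lean document; each statement's English description precedes it below -/
import Mathlib

section
/- Let (b_1,…,b_r) be a sequence of integers with every b_i ≥ 2 whose Hirzebruch–Jung continued fraction equals d·n²/(d·n·a − 1) for integers d ≥ 1 and coprime n > a ≥ 1. Set m = 2n − a. Then m > n, gcd(m, n) = 1, and the sequence (2, b_1, …, b_{r−1}, b_r + 1) has every term ≥ 2 and Hirzebruch–Jung continued fraction equal to d·m²/(d·m·n − 1). In particular, the set of T-chain data is closed under the operation (b_1,…,b_r) ↦ (2, b_1, …, b_{r−1}, b_r + 1). -/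
/-- Hirzebruch–Jung continued fraction of a list of integers:
`hj [b₁,…,b_r] = b₁ - 1/(b₂ - 1/(⋯ - 1/b_r))`.
(Since `1/0 = 0` in `ℚ`, `hj [b] = b`.) -/
def hj : List ℤ → ℚ
  | [] => 0
  | b :: l => (b : ℚ) - 1 / hj l

/-- A nonempty sequence of integers, each `≥ 2`, is a T-chain datum if its
Hirzebruch–Jung continued fraction equals `d·n²/(d·n·a − 1)` for some integers
`d ≥ 1` and coprime `n > a ≥ 1`. -/
def IsTChainDatum (l : List ℤ) : Prop :=
  l ≠ [] ∧ (∀ b ∈ l, 2 ≤ b) ∧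
    ∃ d n a : ℤ, 1 ≤ d ∧ 1 ≤ a ∧ a < n ∧ Int.gcd n a = 1 ∧
      hj l = (d * n ^ 2 : ℚ) / (d * n * a - 1)


/-!
Write `[b₁,…,b_{r-1}, x] = (p x + p') / (q x + q')` with `p q' - p' q = 1` (the convergents of
the chain). At `x = b_r` this is `N / D` in lowest terms, so `N = d n²` and `D = d n a - 1`; the
Bézout relation `p D - q N = 1` with `0 ≤ q < D` then forces `q = d a (n - a) - 1` and
`p = d n (n - a) - 1`. Raising `b_r` by one adds `(p, q)` to `(N, D)`, giving
`(d m n - 1) / (d m a - 2)` where `m = 2 n - a`, and prefixing `2` yields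
`2 - (d m a - 2) / (d m n - 1) = d m² / (d m n - 1)`.
-/

lemma Int.gcd_two_mul_sub_eq_one {n a : ℤ} (h : Int.gcd n a = 1) : Int.gcd (2 * n - a) n = 1 := by
  have := (Int.isCoprime_iff_gcd_eq_one.mpr h).symm.neg_left.add_mul_left_left 2
  rw [show 2 * n - a = -a + n * 2 by ring]
  exact Int.isCoprime_iff_gcd_eq_one.mp this

lemma two_le_of_mem_two_cons_dropLast_append_getLast_add_one (l : List ℤ) (hne : l ≠ [])
    (h2 : ∀ b ∈ l, 2 ≤ b) : ∀ b ∈ (2 :: (l.dropLast ++ [l.getLast hne + 1])), 2 ≤ b := by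
  simp only [List.mem_cons, List.mem_append, List.not_mem_nil, or_false]
  rintro b (rfl | hb | rfl)
  · exact le_rfl
  · exact h2 b (List.dropLast_subset l hb)
  · linarith [h2 _ (List.getLast_mem hne)]

lemma exists_hj_append_eq_div (l : List ℤ) (hl : ∀ b ∈ l, 2 ≤ b) :
    ∃ p p' q q' : ℤ, p * q' - p' * q = 1 ∧ 0 ≤ q ∧ q < p ∧ 1 ≤ q + q' ∧ q + q' ≤ p + p' ∧
      ∀ c : ℤ, 1 ≤ c → hj (l ++ [c]) = (p * c + p' : ℚ) / (q * c + q') := by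
  induction l with
  | nil => exact ⟨1, 0, 0, 1, by norm_num, le_rfl, one_pos, le_rfl, le_rfl, fun c _ => by simp [hj]⟩
  | cons b l ih =>
    obtain ⟨p, p', q, q', hdet, hq, hqp, hqq', hpp', hform⟩ :=
      ih fun c hc => hl c (List.mem_cons_of_mem _ hc)
    have hb : 2 ≤ b := hl b List.mem_cons_self
    refine ⟨b * p - q, b * p' - q', p, p', by linear_combination hdet, by omega, by nlinarith,
      by omega, by nlinarith, fun c hc => ?_⟩
    have hden : (p * c + p' : ℚ) ≠ 0 := by
      have : 0 < p * c + p' := by nlinarith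
      exact_mod_cast this.ne'
    rw [List.cons_append, hj, hform c hc, one_div_div, eq_div_iff hden, sub_mul,
      div_mul_cancel₀ _ hden]
    push_cast
    ring

lemma eq_of_mul_sub_mul_eq_one {N D p q p₀ q₀ : ℤ} (h : p * D - q * N = 1)
    (h₀ : p₀ * D - q₀ * N = 1) (hq : 0 ≤ q) (hqD : q < D) (hq₀ : 0 ≤ q₀) (hq₀D : q₀ < D) :
    p = p₀ ∧ q = q₀ := by
  have hDN : IsCoprime D N := ⟨p, -q, by linear_combination h⟩
  have hdvd : D ∣ q - q₀ := hDN.dvd_of_dvd_mul_right ⟨p - p₀, by linear_combination h₀ - h⟩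
  have hq_eq : q = q₀ := by
    have := Int.eq_zero_of_abs_lt_dvd hdvd (abs_sub_lt_iff.mpr ⟨by omega, by omega⟩)
    omega
  subst hq_eq
  exact ⟨mul_right_cancel₀ (by omega : D ≠ 0) (by linarith), rfl⟩

lemma hj_dropLast_append_getLast_add_one (l : List ℤ) (hne : l ≠ []) (h2 : ∀ b ∈ l, 2 ≤ b)
    (d n a : ℤ) (hd : 1 ≤ d) (ha : 1 ≤ a) (han : a < n)
    (hhj : hj l = (d * n ^ 2 : ℚ) / (d * n * a - 1)) :
    hj (l.dropLast ++ [l.getLast hne + 1]) =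
      (d * n * (2 * n - a) - 1 : ℚ) / (d * a * (2 * n - a) - 2) := by
  set b := l.getLast hne
  have hb : 2 ≤ b := h2 b (List.getLast_mem hne)
  obtain ⟨p, p', q, q', hdet, hq, -, hqq', -, hform⟩ :=
    exists_hj_append_eq_div l.dropLast fun c hc => h2 c (List.dropLast_subset l hc)
  have hqD : q < q * b + q' := by nlinarith
  have hdna : 0 < d * n * a - 1 := by
    have : 1 ≤ d * a := one_le_mul_of_one_le_of_one_le hd ha
    nlinarith
  have hcop : IsCoprime (p * b + p') (q * b + q') := ⟨-q, p, by linear_combination hdet⟩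
  have hcop' : IsCoprime (d * n ^ 2) (d * n * a - 1) := ⟨d * a ^ 2, -(d * n * a + 1), by ring⟩
  have hfrac :
      ((p * b + p' : ℤ) : ℚ) / (q * b + q' : ℤ) = (d * n ^ 2 : ℤ) / (d * n * a - 1 : ℤ) := by
    rw [← List.dropLast_append_getLast hne, hform b (by omega)] at hhj
    push_cast
    exact hhj
  obtain ⟨hN, hD⟩ := Rat.div_int_inj (by omega) hdna (Int.isCoprime_iff_nat_coprime.mp hcop)
    (Int.isCoprime_iff_nat_coprime.mp hcop') hfrac
  have hbezout : p * (d * n * a - 1) - q * (d * n ^ 2) = 1 := by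
    rw [← hN, ← hD]
    linear_combination hdet
  obtain ⟨rfl, rfl⟩ := eq_of_mul_sub_mul_eq_one hbezout
    (p₀ := d * n * (n - a) - 1) (q₀ := d * a * (n - a) - 1) (by ring)
    hq (hD ▸ hqD) (by nlinarith) (by nlinarith)
  rw [hform (b + 1) (by omega)]
  have hN' : ((d * n * (n - a) - 1) * b + p' : ℚ) = d * n ^ 2 := by exact_mod_cast hN
  have hD' : ((d * a * (n - a) - 1) * b + q' : ℚ) = d * n * a - 1 := by exact_mod_cast hD
  push_cast
  congr 1
  · linear_combination hN'
  · linear_combination hD'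

/-- If `(b₁,…,b_r)` has all entries `≥ 2` and HJ continued fraction
`d·n²/(d·n·a − 1)` with `d ≥ 1`, coprime `n > a ≥ 1`, then with `m = 2n − a`
one has `m > n`, `gcd(m,n) = 1`, and `(2, b₁, …, b_{r−1}, b_r + 1)` has all
entries `≥ 2` with HJ continued fraction `d·m²/(d·m·n − 1)`.  In particular
T-chain data are closed under `(b₁,…,b_r) ↦ (2, b₁, …, b_{r−1}, b_r + 1)`. -/
theorem stmt2 (l : List ℤ) (hne : l ≠ []) (h2 : ∀ b ∈ l, 2 ≤ b)
    (d n a : ℤ) (hd : 1 ≤ d) (ha : 1 ≤ a) (han : a < n) (hcop : Int.gcd n a = 1)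
    (hhj : hj l = (d * n ^ 2 : ℚ) / (d * n * a - 1)) :
    n < 2 * n - a ∧ Int.gcd (2 * n - a) n = 1 ∧
    (∀ b ∈ (2 :: (l.dropLast ++ [l.getLast hne + 1])), 2 ≤ b) ∧
    hj (2 :: (l.dropLast ++ [l.getLast hne + 1])) =
      (d * (2 * n - a) ^ 2 : ℚ) / (d * (2 * n - a) * n - 1) ∧
    IsTChainDatum (2 :: (l.dropLast ++ [l.getLast hne + 1])) := by
  have hmn : n < 2 * n - a := by omega
  have hcop' : Int.gcd (2 * n - a) n = 1 := Int.gcd_two_mul_sub_eq_one hcop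
  have hge := two_le_of_mem_two_cons_dropLast_append_getLast_add_one l hne h2
  have hval : hj (2 :: (l.dropLast ++ [l.getLast hne + 1])) =
      (d * (2 * n - a) ^ 2 : ℚ) / (d * (2 * n - a) * n - 1) := by
    have hpos : (0 : ℚ) < d * n * (2 * n - a) - 1 := by
      have hdn : 1 ≤ d * n := one_le_mul_of_one_le_of_one_le hd (by omega)
      have : 1 < d * n * (2 * n - a) := by nlinarith
      exact_mod_cast sub_pos.mpr this
    rw [hj, hj_dropLast_append_getLast_add_one l hne h2 d n a hd ha han hhj, one_div_div]
    field_simp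
    ring
  refine ⟨hmn, hcop', hge, hval, List.cons_ne_nil _ _, hge, d, 2 * n - a, n, hd, by omega, hmn,
    hcop', ?_⟩
  exact_mod_cast hval
end

section
/- Let (b_1,…,b_r) be a sequence of integers with every b_i ≥ 2 whose Hirzebruch–Jung continued fraction equals d·n²/(d·n·a − 1) for integers d ≥ 1 and coprime n > a ≥ 1. Set m = n + a. Then m > a, gcd(m, a) = 1, and the sequence (b_1 + 1, b_2, …, b_r, 2) has every term ≥ 2 and Hirzebruch–Jung continued fraction equal to d·m²/(d·m·a − 1). In particular, the set of T-chain data is closed under the operation (b_1,…,b_r) ↦ (b_1 + 1, b_2, …, b_r, 2). -/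
/-!
Write `[b₁,…,b_r]` as the product `P` of the matrices `!![bᵢ, -1; 1, 0]` of determinant one;
its first column is the numerator and denominator of the continued fraction. When all
`bᵢ ≥ 2`, the entry `P 0 1` lies in `(-P 0 0, 0]`, and a determinant-one matrix with this
normalisation is determined by its first column. So the value `d·n²/(d·n·a − 1)` pins down
`P` as the explicit matrix `tChainMatrix d n a`. Raising `b₁` by one multiplies `P` by
`!![1, 1; 0, 1]` on the left, appending `2` multiplies it by `!![2, -1; 1, 0]` on the right,
and these turn `tChainMatrix d n a` into `tChainMatrix d (n + a) a`.
-/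

open Matrix

theorem Matrix.isCoprime_of_det_eq_one {P : Matrix (Fin 2) (Fin 2) ℤ} (hP : P.det = 1) :
    IsCoprime (P 0 0) (P 1 0) :=
  ⟨P 1 1, -P 0 1, by rw [det_fin_two] at hP; linear_combination hP⟩

theorem Matrix.eq_of_det_eq_one_of_col_zero_eq {P Q : Matrix (Fin 2) (Fin 2) ℤ}
    (hP : P.det = 1) (hQ : Q.det = 1) (h₀ : P 0 0 = Q 0 0) (h₁ : P 1 0 = Q 1 0)
    (hP₁ : -P 0 0 < P 0 1) (hP₂ : P 0 1 ≤ 0) (hQ₁ : -Q 0 0 < Q 0 1) (hQ₂ : Q 0 1 ≤ 0) :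
    P = Q := by
  rw [det_fin_two] at hP hQ
  have hdiff : P 0 0 * (P 1 1 - Q 1 1) = P 1 0 * (P 0 1 - Q 0 1) := by
    rw [h₀, h₁] at hP ⊢; linear_combination hP - hQ
  have hdvd : P 0 0 ∣ P 0 1 - Q 0 1 :=
    (isCoprime_of_det_eq_one (by rw [det_fin_two]; exact hP)).dvd_of_dvd_mul_left
      ⟨_, hdiff.symm⟩
  have h01 : P 0 1 = Q 0 1 := by
    have := Int.eq_zero_of_abs_lt_dvd hdvd (abs_sub_lt_iff.mpr ⟨by omega, by omega⟩)
    omega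
  have h11 : P 1 1 = Q 1 1 := by
    rw [h01, sub_self, mul_zero] at hdiff
    linarith [(mul_eq_zero.mp hdiff).resolve_left (by omega)]
  ext i j; fin_cases i <;> fin_cases j <;> assumption

def hjMatrix (l : List ℤ) : Matrix (Fin 2) (Fin 2) ℤ :=
  (l.map fun b => !![b, -1; 1, 0]).prod

@[simp] theorem hjMatrix_nil : hjMatrix [] = 1 := rfl

@[simp] theorem hjMatrix_cons (b : ℤ) (l : List ℤ) :
    hjMatrix (b :: l) = !![b, -1; 1, 0] * hjMatrix l := rfl

theorem hjMatrix_append (l₁ l₂ : List ℤ) :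
    hjMatrix (l₁ ++ l₂) = hjMatrix l₁ * hjMatrix l₂ := by
  simp [hjMatrix]

theorem det_hjMatrix (l : List ℤ) : (hjMatrix l).det = 1 := by
  induction l with
  | nil => simp
  | cons b l ih => rw [hjMatrix_cons, det_mul, ih]; simp [det_fin_two]

theorem hjMatrix_cons_apply (b : ℤ) (l : List ℤ) :
    hjMatrix (b :: l) = !![b * hjMatrix l 0 0 - hjMatrix l 1 0, b * hjMatrix l 0 1 - hjMatrix l 1 1;
      hjMatrix l 0 0, hjMatrix l 0 1] := by
  rw [hjMatrix_cons, eta_fin_two (hjMatrix l), mul_fin_two]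
  simp [sub_eq_add_neg]

-- For `P = hjMatrix l`, `(-P 0 1, -P 1 1)` is the fraction of `l` with its last entry dropped;
-- these inequalities are the invariant that survives prepending an entry `≥ 2`.
theorem hjMatrix_bounds {l : List ℤ} (hl : ∀ x ∈ l, 2 ≤ x) :
    hjMatrix l 0 1 ≤ 0 ∧ hjMatrix l 0 1 ≤ hjMatrix l 1 1 ∧
      1 ≤ hjMatrix l 1 0 + hjMatrix l 1 1 ∧
        hjMatrix l 1 0 + hjMatrix l 1 1 ≤ hjMatrix l 0 0 + hjMatrix l 0 1 := by
  induction l with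
  | nil => simp
  | cons b l ih =>
    obtain ⟨h₁, h₂, h₃, h₄⟩ := ih fun x hx => hl x (List.mem_cons_of_mem b hx)
    have hb : 2 ≤ b := hl b List.mem_cons_self
    rw [hjMatrix_cons_apply]
    simp only [of_apply, cons_val', cons_val_zero, cons_val_one, empty_val', cons_val_fin_one]
    refine ⟨?_, ?_, by omega, ?_⟩ <;> nlinarith

theorem hjMatrix_zero_one_mem {l : List ℤ} (hl : ∀ x ∈ l, 2 ≤ x) :
    -hjMatrix l 0 0 < hjMatrix l 0 1 ∧ hjMatrix l 0 1 ≤ 0 := by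
  have := hjMatrix_bounds hl
  omega

theorem hjMatrix_one_zero_cons_pos {b : ℤ} {l : List ℤ} (hl : ∀ x ∈ l, 2 ≤ x) :
    0 < hjMatrix (b :: l) 1 0 := by
  have := hjMatrix_zero_one_mem hl
  rw [hjMatrix_cons_apply]
  simp only [of_apply, cons_val', cons_val_zero, cons_val_one, empty_val', cons_val_fin_one]
  omega

theorem hj_eq_hjMatrix {l : List ℤ} (hl : ∀ x ∈ l, 2 ≤ x) :
    hj l = (hjMatrix l 0 0 : ℚ) / hjMatrix l 1 0 := by
  induction l with
  | nil => simp [hj]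
  | cons b l ih =>
    have hl' : ∀ x ∈ l, 2 ≤ x := fun x hx => hl x (List.mem_cons_of_mem b hx)
    have hpos : (0 : ℚ) < hjMatrix l 0 0 := by
      have := hjMatrix_zero_one_mem hl'
      exact_mod_cast (show 0 < hjMatrix l 0 0 by omega)
    rw [hj, ih hl', hjMatrix_cons_apply]
    simp only [of_apply, cons_val', cons_val_zero, cons_val_one, empty_val', cons_val_fin_one]
    push_cast
    field_simp

theorem hjMatrix_succ_cons_append_two (b : ℤ) (t : List ℤ) :
    hjMatrix ((b + 1) :: (t ++ [2])) = !![1, 1; 0, 1] * hjMatrix (b :: t) * !![2, -1; 1, 0] := by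
  have hshear : !![b + 1, -1; 1, 0] = !![1, 1; 0, 1] * !![b, -1; 1, 0] := by
    simp
  rw [hjMatrix_cons, hjMatrix_append, hshear, hjMatrix_cons, hjMatrix_cons, hjMatrix_nil,
    Matrix.mul_one]
  simp only [Matrix.mul_assoc]

def tChainMatrix (d n a : ℤ) : Matrix (Fin 2) (Fin 2) ℤ :=
  !![d * n ^ 2, d * n * a + 1 - d * n ^ 2; d * n * a - 1, d * a ^ 2 - d * n * a + 1]

theorem det_tChainMatrix (d n a : ℤ) : (tChainMatrix d n a).det = 1 := by
  simp [tChainMatrix, det_fin_two]; ring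

theorem shear_mul_tChainMatrix_mul (d n a : ℤ) :
    !![1, 1; 0, 1] * tChainMatrix d n a * !![2, -1; 1, 0] = tChainMatrix d (n + a) a := by
  ext i j
  fin_cases i <;> fin_cases j <;> simp [tChainMatrix] <;> ring

theorem hjMatrix_eq_tChainMatrix {b : ℤ} {t : List ℤ} (h2 : ∀ x ∈ b :: t, 2 ≤ x)
    {d n a : ℤ} (hd : 1 ≤ d) (ha : 1 ≤ a) (han : a < n)
    (hhj : hj (b :: t) = (d * n ^ 2 : ℚ) / (d * n * a - 1)) :
    hjMatrix (b :: t) = tChainMatrix d n a := by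
  set P := hjMatrix (b :: t)
  set T := tChainMatrix d n a
  have hT00 : T 0 0 = d * n ^ 2 := rfl
  have hT10 : T 1 0 = d * n * a - 1 := rfl
  have hT01 : T 0 1 = d * n * a + 1 - d * n ^ 2 := rfl
  have hna : 2 ≤ n * a := by nlinarith
  have hdna : 2 ≤ d * (n * a) := by nlinarith
  have hcol : P 0 0 = T 0 0 ∧ P 1 0 = T 1 0 := by
    refine Rat.div_int_inj
      (hjMatrix_one_zero_cons_pos fun x hx => h2 x (List.mem_cons_of_mem b hx))
      (by rw [hT10]; nlinarith)
      (Int.isCoprime_iff_gcd_eq_one.mp (isCoprime_of_det_eq_one (det_hjMatrix _)))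
      (Int.isCoprime_iff_gcd_eq_one.mp (isCoprime_of_det_eq_one (det_tChainMatrix d n a))) ?_
    rw [← hj_eq_hjMatrix h2, hhj, hT00, hT10]
    push_cast; rfl
  obtain ⟨hP₁, hP₂⟩ := hjMatrix_zero_one_mem h2
  exact eq_of_det_eq_one_of_col_zero_eq (det_hjMatrix _) (det_tChainMatrix d n a) hcol.1 hcol.2
    hP₁ hP₂ (by rw [hT00, hT01]; nlinarith) (by rw [hT01]; nlinarith)

/-- If `(b₁,…,b_r)` has all entries `≥ 2` and HJ continued fraction
`d·n²/(d·n·a − 1)` with `d ≥ 1`, coprime `n > a ≥ 1`, then with `m = n + a`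
one has `m > a`, `gcd(m,a) = 1`, and `(b₁ + 1, b₂, …, b_r, 2)` has all entries
`≥ 2` with HJ continued fraction `d·m²/(d·m·a − 1)`.  In particular T-chain
data are closed under `(b₁,…,b_r) ↦ (b₁ + 1, b₂, …, b_r, 2)`. -/
theorem stmt3 (b : ℤ) (t : List ℤ) (h2 : ∀ x ∈ b :: t, 2 ≤ x)
    (d n a : ℤ) (hd : 1 ≤ d) (ha : 1 ≤ a) (han : a < n) (hcop : Int.gcd n a = 1)
    (hhj : hj (b :: t) = (d * n ^ 2 : ℚ) / (d * n * a - 1)) :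
    a < n + a ∧ Int.gcd (n + a) a = 1 ∧
    (∀ x ∈ ((b + 1) :: (t ++ [2])), 2 ≤ x) ∧
    hj ((b + 1) :: (t ++ [2])) =
      (d * (n + a) ^ 2 : ℚ) / (d * (n + a) * a - 1) ∧
    IsTChainDatum ((b + 1) :: (t ++ [2])) := by
  have hgcd : Int.gcd (n + a) a = 1 := by rwa [Int.gcd_add_self_left]
  have hmem : ∀ x ∈ (b + 1) :: (t ++ [2]), 2 ≤ x := by
    have := h2 b List.mem_cons_self
    simp only [List.mem_cons, List.mem_append, List.not_mem_nil, or_false] at h2 ⊢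
    rintro x (rfl | hx | rfl)
    exacts [by omega, h2 x (Or.inr hx), le_rfl]
  have hhj' : hj ((b + 1) :: (t ++ [2])) = (d * (n + a) ^ 2 : ℚ) / (d * (n + a) * a - 1) := by
    rw [hj_eq_hjMatrix hmem, hjMatrix_succ_cons_append_two,
      hjMatrix_eq_tChainMatrix h2 hd ha han hhj, shear_mul_tChainMatrix_mul]
    simp [tChainMatrix]
  exact ⟨by omega, hgcd, hmem, hhj', List.cons_ne_nil _ _, hmem, d, n + a, a, hd, ha, by omega,
    hgcd, by exact_mod_cast hhj'⟩
end

section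
/- A finite sequence of integers each ≥ 2 is a T-chain datum if and only if it belongs to the inductively generated family G. (This is the numerical content of the Kollár–Shepherd-Barron description: every singularity of class T that is not a rational double point is obtained from the singularities with resolution chains (4) and (3,2,…,2,3) by iterating the two augmentation operations.) -/
/-- The operation `(b₁,…,b_r) ↦ (2, b₁, …, b_{r−1}, b_r + 1)`. -/
def opLeft (l : List ℤ) : List ℤ := 2 :: (l.dropLast ++ [l.getLastD 0 + 1])

/-- The operation `(b₁,…,b_r) ↦ (b₁ + 1, b₂, …, b_r, 2)`. -/
def opRight (l : List ℤ) : List ℤ := (l.headI + 1) :: (l.tail ++ [2])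

/-- The inductively generated family `G`: it contains `(4)`, all chains
`(3, 2, …, 2, 3)` (with `k ≥ 0` twos), and is closed under the two
augmentation operations. -/
inductive G : List ℤ → Prop
  | four : G [4]
  | chain (k : ℕ) : G (3 :: (List.replicate k 2 ++ [3]))
  | left {l : List ℤ} : G l → G (opLeft l)
  | right {l : List ℤ} : G l → G (opRight l)

/-!
Encode a chain `l = (b₁, …, b_r)` by its continuant matrix `M(b₁) ⋯ M(b_r) ∈ SL(2, ℤ)`, where
`M(b) = Tᵇ S = !![b, -1; 1, 0]`. When all `bᵢ ≥ 2`, its first column `(p, q)` satisfies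
`0 ≤ q < p` and `hj l = p / q`, and the reversed chain has first column `(p, -p₁₂)`; hence
`hj l = d n² / (d n a - 1)` pins the whole matrix down to `tMat d n a`. The two augmentations
multiply the matrix by fixed elements of `SL(2, ℤ)`, sending `tMat d n a` to `tMat d (2n - a) n`
and to `tMat d (n + a) a`; this proves that every member of `G` is a T-chain datum.
Conversely, if `n < 2a` the chain starts with `2` (as `hj l ≤ 2`) and ends with an entry `≥ 3`
(as the reversed chain, with parameters `(d, n, n - a)`, has `hj > 2`), so it is `opLeft` of a
T-chain with the smaller parameter `a` in place of `n`. The case `n > 2a` is the mirror image, and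
for `n = 2a` the matrix is `tMat (d a²) 2 1`, the matrix of `(4)` or of `(3, 2, …, 2, 3)`.
-/

open MatrixGroups ModularGroup

lemma SL2_eq_of_col_zero_eq {A B : SL(2, ℤ)} (h₀ : A 0 0 = B 0 0) (h₁ : A 1 0 = B 1 0)
    (hA : A 0 1 ∈ Set.Ioc (-A 0 0) 0) (hB : B 0 1 ∈ Set.Ioc (-A 0 0) 0) : A = B := by
  have hdetA := A.det_coe
  have hdetB := B.det_coe
  rw [Matrix.det_fin_two] at hdetA hdetB
  rw [← h₀, ← h₁] at hdetB
  have hdvd : A 0 0 ∣ A 0 1 - B 0 1 :=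
    (A.isCoprime_col 0).dvd_of_dvd_mul_right ⟨A 1 1 - B 1 1, by linear_combination hdetB - hdetA⟩
  have h01 : A 0 1 = B 0 1 := by
    have := Int.eq_zero_of_abs_lt_dvd hdvd
      (abs_lt.2 ⟨by linarith [hA.1, hB.2], by linarith [hA.2, hB.1]⟩)
    omega
  have h11 : A 1 1 = B 1 1 := by
    refine mul_left_cancel₀ (by linarith [hA.1, hA.2] : A 0 0 ≠ 0) ?_
    rw [← h01] at hdetB
    linear_combination hdetA - hdetB
  ext i j
  fin_cases i <;> fin_cases j
  exacts [h₀, h01, h₁, h11]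

def hjMat (b : ℤ) : SL(2, ℤ) := T ^ b * S

def chainMat (l : List ℤ) : SL(2, ℤ) := (l.map hjMat).prod

lemma coe_hjMat (b : ℤ) : (hjMat b : Matrix (Fin 2) (Fin 2) ℤ) = !![b, -1; 1, 0] := by
  simp [hjMat, coe_T_zpow]

lemma hjMat_add_one_left (b : ℤ) : hjMat (b + 1) = T * hjMat b := by
  simp only [hjMat]; group

lemma hjMat_add_one_right (b : ℤ) : hjMat (b + 1) = hjMat b * (S⁻¹ * T * S) := by
  simp only [hjMat]; group

lemma coe_S_inv_mul_T_mul_S :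
    ((S⁻¹ * T * S : SL(2, ℤ)) : Matrix (Fin 2) (Fin 2) ℤ) = !![1, 0; -1, 1] := by
  simp [S_inv]

lemma chainMat_nil : chainMat [] = 1 := rfl

lemma chainMat_cons (b : ℤ) (l : List ℤ) : chainMat (b :: l) = hjMat b * chainMat l := rfl

lemma chainMat_singleton (b : ℤ) : chainMat [b] = hjMat b := by
  simp [chainMat]

lemma chainMat_append (l₁ l₂ : List ℤ) :
    chainMat (l₁ ++ l₂) = chainMat l₁ * chainMat l₂ := by
  simp [chainMat]

lemma coe_chainMat_cons (b : ℤ) (l : List ℤ) : (chainMat (b :: l) : Matrix (Fin 2) (Fin 2) ℤ) =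
    !![b * chainMat l 0 0 - chainMat l 1 0, b * chainMat l 0 1 - chainMat l 1 1;
      chainMat l 0 0, chainMat l 0 1] := by
  rw [chainMat_cons, Matrix.SpecialLinearGroup.coe_mul, coe_hjMat]
  ext i j
  fin_cases i <;> fin_cases j <;> simp [Matrix.mul_apply, Fin.sum_univ_two] <;> ring

lemma chainMat_cons_zero_zero (b : ℤ) (l : List ℤ) :
    chainMat (b :: l) 0 0 = b * chainMat l 0 0 - chainMat l 1 0 := by
  rw [coe_chainMat_cons]; rfl

lemma chainMat_cons_one_zero (b : ℤ) (l : List ℤ) :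
    chainMat (b :: l) 1 0 = chainMat l 0 0 := by
  rw [coe_chainMat_cons]; rfl

lemma coe_chainMat_reverse (l : List ℤ) : (chainMat l.reverse : Matrix (Fin 2) (Fin 2) ℤ) =
    !![chainMat l 0 0, -chainMat l 1 0; -chainMat l 0 1, chainMat l 1 1] := by
  induction l with
  | nil => ext i j; fin_cases i <;> fin_cases j <;> rfl
  | cons b t ih =>
    rw [List.reverse_cons, chainMat_append, Matrix.SpecialLinearGroup.coe_mul, ih,
      chainMat_singleton, coe_hjMat, Matrix.mul_fin_two, coe_chainMat_cons]
    simp only [Matrix.of_apply, Matrix.cons_val', Matrix.cons_val_zero, Matrix.cons_val_one,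
      Matrix.cons_val_fin_one]
    congrm !![?_, ?_; ?_, ?_] <;> ring

lemma chainMat_reverse_zero_zero (l : List ℤ) : chainMat l.reverse 0 0 = chainMat l 0 0 := by
  rw [coe_chainMat_reverse]; rfl

lemma chainMat_reverse_one_zero (l : List ℤ) : chainMat l.reverse 1 0 = -chainMat l 0 1 := by
  rw [coe_chainMat_reverse]; rfl

lemma chainMat_col_zero_bounds {l : List ℤ} (hl : ∀ b ∈ l, 2 ≤ b) :
    0 ≤ chainMat l 1 0 ∧ chainMat l 1 0 < chainMat l 0 0 := by
  induction l with
  | nil => exact ⟨le_rfl, zero_lt_one⟩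
  | cons b t ih =>
    obtain ⟨hq, hqp⟩ := ih (List.forall_mem_cons.1 hl).2
    have hb := (List.forall_mem_cons.1 hl).1
    rw [chainMat_cons_zero_zero, chainMat_cons_one_zero]
    constructor <;> nlinarith

lemma chainMat_cons_bounds {b : ℤ} {t : List ℤ} (hl : ∀ x ∈ b :: t, 2 ≤ x) :
    0 < chainMat (b :: t) 1 0 ∧
      (b - 1) * chainMat (b :: t) 1 0 < chainMat (b :: t) 0 0 ∧
      chainMat (b :: t) 0 0 ≤ b * chainMat (b :: t) 1 0 := by
  obtain ⟨hq, hqp⟩ := chainMat_col_zero_bounds (List.forall_mem_cons.1 hl).2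
  rw [chainMat_cons_zero_zero, chainMat_cons_one_zero]
  refine ⟨by omega, by linarith, by linarith⟩

lemma eq_of_chainMat_col_zero_eq : ∀ {l₁ l₂ : List ℤ}, (∀ b ∈ l₁, 2 ≤ b) → (∀ b ∈ l₂, 2 ≤ b) →
    chainMat l₁ 0 0 = chainMat l₂ 0 0 → chainMat l₁ 1 0 = chainMat l₂ 1 0 → l₁ = l₂
  | [], [], _, _, _, _ => rfl
  | [], _ :: _, _, h₂, _, hq => absurd hq (chainMat_cons_bounds h₂).1.ne
  | _ :: _, [], h₁, _, _, hq => absurd hq (chainMat_cons_bounds h₁).1.ne'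
  | b :: s, c :: t, h₁, h₂, hp, hq => by
    obtain ⟨hq₁, hb₁, hb₂⟩ := chainMat_cons_bounds h₁
    obtain ⟨-, hc₁, hc₂⟩ := chainMat_cons_bounds h₂
    rw [← hp, ← hq] at hc₁ hc₂
    obtain rfl : b = c := le_antisymm (by nlinarith) (by nlinarith)
    rw [chainMat_cons_one_zero, chainMat_cons_one_zero] at hq
    rw [chainMat_cons_zero_zero, chainMat_cons_zero_zero, hq] at hp
    rw [eq_of_chainMat_col_zero_eq (List.forall_mem_cons.1 h₁).2 (List.forall_mem_cons.1 h₂).2 hq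
      (by linarith)]

lemma hj_eq_div {l : List ℤ} (hl : ∀ b ∈ l, 2 ≤ b) :
    hj l = (chainMat l 0 0 : ℚ) / chainMat l 1 0 := by
  induction l with
  | nil => simp [hj, chainMat_nil]
  | cons b t ih =>
    have hp : (chainMat t 0 0 : ℚ) ≠ 0 := by
      have := chainMat_col_zero_bounds (List.forall_mem_cons.1 hl).2
      exact_mod_cast (by omega : chainMat t 0 0 ≠ 0)
    rw [hj, ih (List.forall_mem_cons.1 hl).2, chainMat_cons_zero_zero,
      chainMat_cons_one_zero]
    push_cast
    field_simp

-- First column `(d n², d n a - 1)`; the `(0, 1)` entry is minus the denominator `d n (n - a) - 1`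
-- of the reversed chain.
def tMat (d n a : ℤ) : SL(2, ℤ) :=
  ⟨!![d * n ^ 2, 1 - d * n * (n - a); d * n * a - 1, 1 - d * a * (n - a)], by
    rw [Matrix.det_fin_two_of]; ring⟩

lemma coe_tMat (d n a : ℤ) : (tMat d n a : Matrix (Fin 2) (Fin 2) ℤ) =
    !![d * n ^ 2, 1 - d * n * (n - a); d * n * a - 1, 1 - d * a * (n - a)] := rfl

lemma chainMat_reverse_eq_tMat {l : List ℤ} {d n a : ℤ} (h : chainMat l = tMat d n a) :
    chainMat l.reverse = tMat d n (n - a) := by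
  apply Subtype.ext
  rw [coe_chainMat_reverse, h, coe_tMat, coe_tMat]
  simp only [Matrix.of_apply, Matrix.cons_val', Matrix.cons_val_zero, Matrix.cons_val_one,
      Matrix.cons_val_fin_one]
  congrm !![?_, ?_; ?_, ?_] <;> ring

lemma hjMat_two_mul_tMat_mul (d n a : ℤ) :
    hjMat 2 * tMat d n a * (S⁻¹ * T * S) = tMat d (2 * n - a) n := by
  apply Subtype.ext
  rw [Matrix.SpecialLinearGroup.coe_mul, coe_S_inv_mul_T_mul_S, Matrix.SpecialLinearGroup.coe_mul,
    coe_hjMat, coe_tMat, coe_tMat, Matrix.mul_fin_two, Matrix.mul_fin_two]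
  congrm !![?_, ?_; ?_, ?_] <;> ring

lemma T_mul_tMat_mul_hjMat_two (d n a : ℤ) : T * tMat d n a * hjMat 2 = tMat d (n + a) a := by
  apply Subtype.ext
  simp only [Matrix.SpecialLinearGroup.coe_mul, coe_hjMat, coe_tMat, coe_T, Matrix.mul_fin_two]
  congrm !![?_, ?_; ?_, ?_] <;> ring

lemma chainMat_zero_one_mem_Ioc {l : List ℤ} (hl : ∀ b ∈ l, 2 ≤ b) :
    chainMat l 0 1 ∈ Set.Ioc (-chainMat l 0 0) 0 := by
  have := chainMat_col_zero_bounds (l := l.reverse) fun b hb => hl b (List.mem_reverse.1 hb)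
  rw [chainMat_reverse_zero_zero, chainMat_reverse_one_zero] at this
  constructor <;> linarith

lemma chainMat_eq_tMat_iff {l : List ℤ} (hl : ∀ b ∈ l, 2 ≤ b) (hne : l ≠ []) {d n a : ℤ}
    (hd : 1 ≤ d) (ha : 1 ≤ a) (han : a < n) :
    chainMat l = tMat d n a ↔ hj l = (d * n ^ 2 : ℚ) / (d * n * a - 1) := by
  refine ⟨fun h => ?_, fun h => ?_⟩
  · rw [hj_eq_div hl, h]
    simp [tMat]
  obtain ⟨b, t, rfl⟩ := List.exists_cons_of_ne_nil hne
  have hq := (chainMat_cons_bounds hl).1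
  have hdn : 2 ≤ d * n := by nlinarith
  have hdna : 2 ≤ d * n * a := by nlinarith
  obtain ⟨hp, hq'⟩ := Rat.div_int_inj (c := d * n ^ 2) (d := d * n * a - 1) hq (by omega)
    (Int.isCoprime_iff_nat_coprime.1 ((chainMat (b :: t)).isCoprime_col 0))
    (Int.isCoprime_iff_nat_coprime.1
      ⟨1 - d * a * (n - a), d * n * (n - a) - 1, by ring⟩)
    (by rw [← hj_eq_div hl, h]; push_cast; ring)
  refine SL2_eq_of_col_zero_eq hp hq' (chainMat_zero_one_mem_Ioc hl) ?_
  rw [hp]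
  change 1 - d * n * (n - a) ∈ Set.Ioc (-(d * n ^ 2)) 0
  constructor <;> nlinarith

lemma opLeft_concat (t : List ℤ) (g : ℤ) : opLeft (t ++ [g]) = 2 :: (t ++ [g + 1]) := by
  simp [opLeft]

lemma opRight_cons (c : ℤ) (t : List ℤ) : opRight (c :: t) = (c + 1) :: (t ++ [2]) := rfl

lemma reverse_opLeft (l : List ℤ) : (opLeft l).reverse = opRight l.reverse := by
  rcases List.eq_nil_or_concat' l with rfl | ⟨t, g, rfl⟩
  · rfl
  · simp [opLeft_concat, opRight_cons]

lemma reverse_opRight (l : List ℤ) : (opRight l).reverse = opLeft l.reverse := by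
  rw [← List.reverse_reverse (opLeft _), reverse_opLeft, List.reverse_reverse]

lemma chainMat_opLeft {l : List ℤ} (hne : l ≠ []) :
    chainMat (opLeft l) = hjMat 2 * chainMat l * (S⁻¹ * T * S) := by
  obtain ⟨t, g, rfl⟩ := (List.eq_nil_or_concat' l).resolve_left hne
  rw [opLeft_concat, chainMat_cons, chainMat_append, chainMat_append, chainMat_singleton,
    chainMat_singleton, hjMat_add_one_right]
  group

lemma chainMat_opRight {l : List ℤ} (hne : l ≠ []) :
    chainMat (opRight l) = T * chainMat l * hjMat 2 := by
  obtain ⟨c, t, rfl⟩ := List.exists_cons_of_ne_nil hne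
  rw [opRight_cons, chainMat_cons, chainMat_append, chainMat_singleton, chainMat_cons,
    hjMat_add_one_left]
  group

lemma chainMat_four : chainMat [4] = tMat 1 2 1 := by
  apply Subtype.ext
  rw [chainMat_singleton, coe_hjMat, coe_tMat]
  norm_num

lemma coe_chainMat_replicate_two_append_three (k : ℕ) :
    (chainMat (List.replicate k 2 ++ [3]) : Matrix (Fin 2) (Fin 2) ℤ) =
      !![2 * (k : ℤ) + 3, -((k : ℤ) + 1); 2 * (k : ℤ) + 1, -(k : ℤ)] := by
  induction k with
  | zero => rw [List.replicate_zero, List.nil_append, chainMat_singleton, coe_hjMat]; norm_num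
  | succ k ih =>
    rw [List.replicate_succ, List.cons_append, coe_chainMat_cons, ih]
    push_cast
    congrm !![?_, ?_; ?_, ?_] <;> simp <;> ring

lemma chainMat_three_replicate_two_three (k : ℕ) :
    chainMat (3 :: (List.replicate k 2 ++ [3])) = tMat (k + 2) 2 1 := by
  apply Subtype.ext
  rw [coe_chainMat_cons, coe_chainMat_replicate_two_append_three, coe_tMat]
  congrm !![?_, ?_; ?_, ?_] <;> simp <;> ring

namespace G

lemma ne_nil {l : List ℤ} (h : G l) : l ≠ [] := by
  cases h <;> simp [opLeft, opRight]

lemma two_le {l : List ℤ} (h : G l) : ∀ b ∈ l, 2 ≤ b := by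
  induction h with
  | four => simp
  | chain k =>
    intro b hb
    simp only [List.mem_cons, List.mem_append, List.mem_replicate, List.not_mem_nil, or_false] at hb
    omega
  | @left l hl ih =>
    obtain ⟨t, g, rfl⟩ := (List.eq_nil_or_concat' l).resolve_left hl.ne_nil
    have := ih g (by simp)
    intro b hb
    simp only [opLeft_concat, List.mem_cons, List.mem_append, List.not_mem_nil, or_false] at hb
    rcases hb with rfl | hb | rfl
    exacts [le_rfl, ih b (by simp [hb]), by omega]
  | @right l hl ih =>
    obtain ⟨c, t, rfl⟩ := List.exists_cons_of_ne_nil hl.ne_nil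
    have := ih c (by simp)
    intro b hb
    simp only [opRight_cons, List.mem_cons, List.mem_append, List.not_mem_nil, or_false] at hb
    rcases hb with rfl | hb | rfl
    exacts [by omega, ih b (by simp [hb]), le_rfl]

lemma reverse {l : List ℤ} (h : G l) : G l.reverse := by
  induction h with
  | four => exact four
  | chain k => simpa using chain k
  | left _ ih => rw [reverse_opLeft]; exact ih.right
  | right _ ih => rw [reverse_opRight]; exact ih.left

lemma exists_chainMat_eq_tMat {l : List ℤ} (h : G l) :
    ∃ d n a : ℤ, 1 ≤ d ∧ 1 ≤ a ∧ a < n ∧ IsCoprime n a ∧ chainMat l = tMat d n a := by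
  induction h with
  | four => exact ⟨1, 2, 1, le_rfl, le_rfl, one_lt_two, ⟨1, -1, by ring⟩, chainMat_four⟩
  | chain k => exact ⟨k + 2, 2, 1, by omega, le_rfl, one_lt_two, ⟨1, -1, by ring⟩,
      chainMat_three_replicate_two_three k⟩
  | left hl ih =>
    obtain ⟨d, n, a, hd, ha, han, ⟨u, v, huv⟩, hP⟩ := ih
    refine ⟨d, 2 * n - a, n, hd, by omega, by omega, ⟨-v, u + 2 * v, by linear_combination huv⟩, ?_⟩
    rw [chainMat_opLeft hl.ne_nil, hP, hjMat_two_mul_tMat_mul]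
  | right hl ih =>
    obtain ⟨d, n, a, hd, ha, han, ⟨u, v, huv⟩, hP⟩ := ih
    refine ⟨d, n + a, a, hd, ha, by omega, ⟨u, v - u, by linear_combination huv⟩, ?_⟩
    rw [chainMat_opRight hl.ne_nil, hP, T_mul_tMat_mul_hjMat_two]

end G

lemma head_bounds_of_chainMat_eq_tMat {c : ℤ} {s : List ℤ} (hl : ∀ x ∈ c :: s, 2 ≤ x)
    {d n a : ℤ} (h : chainMat (c :: s) = tMat d n a) :
    (c - 1) * (d * n * a - 1) < d * n ^ 2 ∧ d * n ^ 2 ≤ c * (d * n * a - 1) := by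
  have := (chainMat_cons_bounds hl).2
  rwa [h] at this

lemma exists_opLeft_eq_of_lt_two_mul {l : List ℤ} (hl : ∀ b ∈ l, 2 ≤ b) (hne : l ≠ [])
    {d n a : ℤ} (hd : 1 ≤ d) (ha : 1 ≤ a) (han : a < n) (h2a : n < 2 * a)
    (hP : chainMat l = tMat d n a) :
    ∃ l', (∀ b ∈ l', 2 ≤ b) ∧ l' ≠ [] ∧ chainMat l' = tMat d a (2 * a - n) ∧ opLeft l' = l := by
  have hdn : 2 ≤ d * n := by nlinarith
  have hfirst : ∀ {c s}, l = c :: s → c = 2 := by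
    rintro c s rfl
    have := head_bounds_of_chainMat_eq_tMat hl hP
    have := hl c List.mem_cons_self
    nlinarith
  have hlast : ∀ {c s}, l.reverse = c :: s → 3 ≤ c := by
    intro c s hcs
    have := head_bounds_of_chainMat_eq_tMat (hcs ▸ fun x hx => hl x (List.mem_reverse.1 hx))
      (hcs ▸ chainMat_reverse_eq_tMat hP)
    nlinarith
  obtain ⟨b, t, rfl⟩ := List.exists_cons_of_ne_nil hne
  obtain ⟨t₀, g, rfl⟩ := (List.eq_nil_or_concat' t).resolve_left fun ht => by
    subst ht
    have := hfirst (c := b) (s := []) rfl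
    have := hlast (c := b) (s := []) rfl
    omega
  obtain rfl := hfirst rfl
  have hg : 3 ≤ g := hlast (s := t₀.reverse ++ [2]) (by simp)
  refine ⟨t₀ ++ [g - 1], fun x hx => ?_, by simp, ?_, by simp [opLeft_concat]⟩
  · rcases List.mem_append.1 hx with hx | hx
    · exact hl x (by simp [hx])
    · rw [List.mem_singleton.1 hx]; omega
  · have hLeft := chainMat_opLeft (l := t₀ ++ [g - 1]) (by simp)
    have hT := hjMat_two_mul_tMat_mul d a (2 * a - n)
    rw [show 2 * a - (2 * a - n) = n by ring] at hT
    rw [opLeft_concat, sub_add_cancel, hP, ← hT] at hLeft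
    exact (mul_left_cancel (mul_right_cancel hLeft)).symm

lemma tMat_two_mul (d a : ℤ) : tMat d (2 * a) a = tMat (d * a ^ 2) 2 1 := by
  apply Subtype.ext
  rw [coe_tMat, coe_tMat]
  congrm !![?_, ?_; ?_, ?_] <;> ring

lemma G_of_chainMat_eq_tMat_two_one {l : List ℤ} (hl : ∀ b ∈ l, 2 ≤ b) {d : ℤ} (hd : 1 ≤ d)
    (hP : chainMat l = tMat d 2 1) : G l := by
  have key : ∀ {l'}, G l' → chainMat l' = tMat d 2 1 → G l := fun hG' hP' => by
    rwa [eq_of_chainMat_col_zero_eq hl hG'.two_le (by rw [hP, hP']) (by rw [hP, hP'])]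
  obtain rfl | hd2 := eq_or_lt_of_le hd
  · exact key G.four chainMat_four
  · lift d - 2 to ℕ using (by omega) with k hk
    exact key (G.chain k) (by rw [chainMat_three_replicate_two_three, hk]; ring_nf)

theorem G_of_chainMat_eq_tMat {l : List ℤ} (hl : ∀ b ∈ l, 2 ≤ b) (hne : l ≠ []) {d n a : ℤ}
    (hd : 1 ≤ d) (ha : 1 ≤ a) (han : a < n) (hP : chainMat l = tMat d n a) : G l := by
  rcases lt_trichotomy n (2 * a) with h | rfl | h
  · obtain ⟨l', hl', hne', hP', rfl⟩ := exists_opLeft_eq_of_lt_two_mul hl hne hd ha han h hP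
    exact (G_of_chainMat_eq_tMat hl' hne' hd (by omega) (by omega) hP').left
  · rw [tMat_two_mul] at hP
    exact G_of_chainMat_eq_tMat_two_one hl (by nlinarith) hP
  · obtain ⟨l', hl', hne', hP', hl'l⟩ := exists_opLeft_eq_of_lt_two_mul
      (fun b hb => hl b (List.mem_reverse.1 hb)) (List.reverse_ne_nil_iff.2 hne) hd (by omega)
      (by omega) (by omega) (chainMat_reverse_eq_tMat hP)
    simpa [hl'l] using (G_of_chainMat_eq_tMat hl' hne' hd (by omega) (by omega) hP').left.reverse
termination_by n.toNat
decreasing_by all_goals omega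

/-- A finite sequence of integers each `≥ 2` is a T-chain datum if and only if
it belongs to the inductively generated family `G` (Kollár–Shepherd-Barron). -/
theorem stmt4 (l : List ℤ) : IsTChainDatum l ↔ G l := by
  constructor
  · rintro ⟨hne, hl, d, n, a, hd, ha, han, -, hhj⟩
    exact G_of_chainMat_eq_tMat hl hne hd ha han ((chainMat_eq_tMat_iff hl hne hd ha han).2 hhj)
  · intro hG
    obtain ⟨d, n, a, hd, ha, han, hcop, hP⟩ := hG.exists_chainMat_eq_tMat
    exact ⟨hG.ne_nil, hG.two_le, d, n, a, hd, ha, han, Int.isCoprime_iff_gcd_eq_one.1 hcop,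
      (chainMat_eq_tMat_iff hG.two_le hG.ne_nil hd ha han).1 hP⟩
end

section
/- Each of the distinct sequences contracted in the construction of a simply connected minimal surface of general type with p_g = 1, q = 0, K² = 5 is a T-chain datum; explicitly: [2,3,8,2,2,2,3,3] = 784/475 = 1·28²/(1·28·17 − 1), [7,2,2,2] = 25/4 = 1·5²/(1·5·1 − 1), [3,5,3,2] = 64/23 = 1·8²/(1·8·3 − 1), [3,3] = 8/3 = 2·2²/(2·2·1 − 1), and [4] = 4 = 1·2²/(1·2·1 − 1). Hence the seven chains of P¹'s listed in the construction contract to cyclic quotient singularities of class T. -/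
theorem hj_eq_and_isTChainDatum {l : List ℤ} {q : ℚ} (d n a : ℤ) (hq : hj l = q)
    (hqT : q = (d * n ^ 2 : ℚ) / (d * n * a - 1)) (hl : l ≠ [] ∧ ∀ b ∈ l, 2 ≤ b)
    (hdna : 1 ≤ d ∧ 1 ≤ a ∧ a < n ∧ Int.gcd n a = 1) :
    hj l = q ∧ hj l = (d * n ^ 2 : ℚ) / (d * n * a - 1) ∧ IsTChainDatum l :=
  ⟨hq, hq.trans hqT, hl.1, hl.2, d, n, a, hdna.1, hdna.2.1, hdna.2.2.1, hdna.2.2.2, hq.trans hqT⟩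

/-- The distinct chains contracted in the `K² = 5` construction are T-chain
data: `[2,3,8,2,2,2,3,3] = 784/475 = 1·28²/(1·28·17 − 1)`,
`[7,2,2,2] = 25/4 = 1·5²/(1·5·1 − 1)`, `[3,5,3,2] = 64/23 = 1·8²/(1·8·3 − 1)`,
`[3,3] = 8/3 = 2·2²/(2·2·1 − 1)`, `[4] = 4 = 1·2²/(1·2·1 − 1)`. -/
theorem stmt15 :
    (hj [2, 3, 8, 2, 2, 2, 3, 3] = 784 / 475 ∧
      hj [2, 3, 8, 2, 2, 2, 3, 3] = ((1 : ℚ) * 28 ^ 2) / (1 * 28 * 17 - 1) ∧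
      IsTChainDatum [2, 3, 8, 2, 2, 2, 3, 3]) ∧
    (hj [7, 2, 2, 2] = 25 / 4 ∧
      hj [7, 2, 2, 2] = ((1 : ℚ) * 5 ^ 2) / (1 * 5 * 1 - 1) ∧
      IsTChainDatum [7, 2, 2, 2]) ∧
    (hj [3, 5, 3, 2] = 64 / 23 ∧
      hj [3, 5, 3, 2] = ((1 : ℚ) * 8 ^ 2) / (1 * 8 * 3 - 1) ∧
      IsTChainDatum [3, 5, 3, 2]) ∧
    (hj [3, 3] = 8 / 3 ∧
      hj [3, 3] = ((2 : ℚ) * 2 ^ 2) / (2 * 2 * 1 - 1) ∧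
      IsTChainDatum [3, 3]) ∧
    (hj [4] = 4 ∧
      hj [4] = ((1 : ℚ) * 2 ^ 2) / (1 * 2 * 1 - 1) ∧
      IsTChainDatum [4]) := by
  refine ⟨hj_eq_and_isTChainDatum 1 28 17 ?_ ?_ ?_ ?_, hj_eq_and_isTChainDatum 1 5 1 ?_ ?_ ?_ ?_,
    hj_eq_and_isTChainDatum 1 8 3 ?_ ?_ ?_ ?_, hj_eq_and_isTChainDatum 2 2 1 ?_ ?_ ?_ ?_,
    hj_eq_and_isTChainDatum 1 2 1 ?_ ?_ ?_ ?_⟩ <;> first | decide | norm_num [hj]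
end
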